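/- arXiv:1609.08274 — 2 statements merged into one kernel-verified Lean document; each statement's English description precedes it below -/
import Mathlib

section
/- If a solution of x' = x² - y², y' = 2xy has initial data (x₀, y₀) with y₀ > 0, then the trajectory lies on the circle x² + (y - R)² = R² where R = (x₀² + y₀²)/(2y₀). -/
theorem stmt_8 (x y : ℝ → ℝ) (x₀ y₀ : ℝ) (hy₀ : 0 < y₀)
    (hx : ∀ t : ℝ, HasDerivAt x (x t ^ 2 - y t ^ 2) t)
    (hy : ∀ t : ℝ, HasDerivAt y (2 * x t * y t) t)
    (hx0 : x 0 = x₀) (hy0 : y 0 = y₀) :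
    ∀ t : ℝ, x t ^ 2 + (y t - (x₀ ^ 2 + y₀ ^ 2) / (2 * y₀)) ^ 2
      = ((x₀ ^ 2 + y₀ ^ 2) / (2 * y₀)) ^ 2 := by
  set R : ℝ := (x₀ ^ 2 + y₀ ^ 2) / (2 * y₀) with hR
  set F : ℝ → ℝ := fun t => x t ^ 2 + (y t - R) ^ 2 - R ^ 2 with hF
  have hxcont : Continuous x := by
    apply continuous_iff_continuousAt.2
    exact fun t => (hx t).continuousAt
  have hxcont2 : Continuous (fun t => 2 * x t) := by continuity
  set A : ℝ → ℝ := fun t => ∫ s in (0:ℝ)..t, 2 * x s with hA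
  have hA' : ∀ t : ℝ, HasDerivAt A (2 * x t) t := fun t =>
    (hxcont2.integral_hasStrictDerivAt 0 t).hasDerivAt
  have hF' : ∀ t : ℝ, HasDerivAt F (2 * x t * F t) t := by
    intro t
    have h1 : HasDerivAt (fun t => x t ^ 2 + (y t - R) ^ 2 - R ^ 2)
        (2 * x t * (x t ^ 2 - y t ^ 2) + 2 * (y t - R) * (2 * x t * y t)) t := by
      have := (((hx t).pow 2).add (((hy t).sub_const R).pow 2)).sub_const (R ^ 2)
      exact this.congr_deriv (by norm_num)
    convert h1 using 1
    simp only [hF]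
    ring
  set G : ℝ → ℝ := fun t => F t * Real.exp (-A t) with hG
  have hG' : ∀ t : ℝ, HasDerivAt G 0 t := by
    intro t
    have he : HasDerivAt (fun t => Real.exp (-A t))
        (Real.exp (-A t) * -(2 * x t)) t := ((hA' t).neg).exp
    have := (hF' t).mul he
    exact this.congr_deriv (by ring)
  have hGconst : ∀ t : ℝ, G t = G 0 := by
    intro t
    have : ∀ s : ℝ, deriv G s = 0 := fun s => (hG' s).deriv
    exact is_const_of_deriv_eq_zero (fun s => (hG' s).differentiableAt) this t 0
  have hG0 : G 0 = 0 := by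
    simp only [hG, hF, hx0, hy0]
    have h2y : (2 : ℝ) * y₀ ≠ 0 := by positivity
    have : x₀ ^ 2 + (y₀ - R) ^ 2 - R ^ 2 = 0 := by
      rw [hR]
      field_simp
      ring
    rw [this, zero_mul]
  intro t
  have hFt : F t = 0 := by
    have := hGconst t
    rw [hG0] at this
    have hexp : Real.exp (-A t) ≠ 0 := Real.exp_ne_zero _
    simpa [hG, hexp] using this
  have := hFt
  simp only [hF] at this
  linarith
end

section
/- The function u(x, t) = 2x(x² + 6it)/(x⁴ - 12t²) satisfies the defocusing nonlinear Schrödinger equation i·u_t = u_xx - 2|u|²·u at all points (x, t) ∈ ℝ² with x⁴ ≠ 12t². -/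
open Complex

noncomputable def uNLS (x t : ℝ) : ℂ :=
  (2 * (x : ℂ) * ((x : ℂ) ^ 2 + 6 * I * (t : ℂ))) / ((x : ℂ) ^ 4 - 12 * (t : ℂ) ^ 2)

private lemma hd_t (z w : ℂ) (hD : z ^ 4 - 12 * w ^ 2 ≠ 0) :
    HasDerivAt (fun w : ℂ => 2 * z * (z ^ 2 + 6 * I * w) / (z ^ 4 - 12 * w ^ 2))
      ((12 * I * z * (z ^ 4 - 12 * w ^ 2) + 24 * w * (2 * z * (z ^ 2 + 6 * I * w))) /
        (z ^ 4 - 12 * w ^ 2) ^ 2) w := by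
  have hN : HasDerivAt (fun w : ℂ => 2 * z * (z ^ 2 + 6 * I * w)) (12 * I * z) w := by
    have := (((hasDerivAt_id w).const_mul (6 * I)).const_add (z ^ 2)).const_mul (2 * z)
    convert this using 1 <;> (try push_cast) <;> (try rfl) <;> ring
  have hDD : HasDerivAt (fun w : ℂ => z ^ 4 - 12 * w ^ 2) (-(24 * w)) w := by
    have := ((hasDerivAt_pow 2 w).const_mul 12).const_sub (z ^ 4)
    convert this using 1 <;> (try push_cast) <;> (try rfl) <;> ring
  have := hN.div hDD hD
  convert this using 1 <;> (try push_cast) <;> (try rfl) <;> ring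

private lemma hd_x (t : ℂ) (z : ℂ) (hD : z ^ 4 - 12 * t ^ 2 ≠ 0) :
    HasDerivAt (fun z : ℂ => 2 * z * (z ^ 2 + 6 * I * t) / (z ^ 4 - 12 * t ^ 2))
      (((6 * z ^ 2 + 12 * I * t) * (z ^ 4 - 12 * t ^ 2)
          - 4 * z ^ 3 * (2 * z * (z ^ 2 + 6 * I * t))) / (z ^ 4 - 12 * t ^ 2) ^ 2) z := by
  have hN : HasDerivAt (fun z : ℂ => 2 * z * (z ^ 2 + 6 * I * t)) (6 * z ^ 2 + 12 * I * t) z := by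
    have h1 : HasDerivAt (fun z : ℂ => 2 * z ^ 3 + 12 * I * z * t) (6 * z ^ 2 + 12 * I * t) z := by
      have := ((hasDerivAt_pow 3 z).const_mul 2).add
        (((hasDerivAt_id z).const_mul (12 * I)).mul_const t)
      convert this using 1 <;> (try push_cast) <;> (try rfl) <;> ring
    have : (fun z : ℂ => 2 * z * (z ^ 2 + 6 * I * t)) = fun z : ℂ => 2 * z ^ 3 + 12 * I * z * t := by
      funext z; ring
    rw [this]; exact h1
  have hDD : HasDerivAt (fun z : ℂ => z ^ 4 - 12 * t ^ 2) (4 * z ^ 3) z := by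
    have := (hasDerivAt_pow 4 z).sub_const (12 * t ^ 2)
    convert this using 1 <;> (try push_cast) <;> (try rfl) <;> ring
  have := hN.div hDD hD
  convert this using 1 <;> (try push_cast) <;> (try rfl) <;> ring

private lemma hd_xx (t : ℂ) (z : ℂ) (hD : z ^ 4 - 12 * t ^ 2 ≠ 0) :
    HasDerivAt (fun z : ℂ =>
      ((6 * z ^ 2 + 12 * I * t) * (z ^ 4 - 12 * t ^ 2)
          - 4 * z ^ 3 * (2 * z * (z ^ 2 + 6 * I * t))) / (z ^ 4 - 12 * t ^ 2) ^ 2)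
      (((12 * z * (z ^ 4 - 12 * t ^ 2) + (6 * z ^ 2 + 12 * I * t) * (4 * z ^ 3)
            - 12 * z ^ 2 * (2 * z * (z ^ 2 + 6 * I * t)) - 4 * z ^ 3 * (6 * z ^ 2 + 12 * I * t))
            * (z ^ 4 - 12 * t ^ 2) ^ 2
          - ((6 * z ^ 2 + 12 * I * t) * (z ^ 4 - 12 * t ^ 2)
              - 4 * z ^ 3 * (2 * z * (z ^ 2 + 6 * I * t)))
            * (2 * (z ^ 4 - 12 * t ^ 2) * (4 * z ^ 3))) /
        ((z ^ 4 - 12 * t ^ 2) ^ 2) ^ 2) z := by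
  have hB : HasDerivAt (fun z : ℂ => (z ^ 4 - 12 * t ^ 2) ^ 2)
      (2 * (z ^ 4 - 12 * t ^ 2) * (4 * z ^ 3)) z := by
    have hDD : HasDerivAt (fun z : ℂ => z ^ 4 - 12 * t ^ 2) (4 * z ^ 3) z := by
      have := (hasDerivAt_pow 4 z).sub_const (12 * t ^ 2)
      convert this using 1 <;> (try push_cast) <;> (try rfl) <;> ring
    have := hDD.pow 2
    convert this using 1 <;> (try push_cast) <;> (try rfl) <;> ring
  have hA : HasDerivAt (fun z : ℂ =>
      (6 * z ^ 2 + 12 * I * t) * (z ^ 4 - 12 * t ^ 2)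
        - 4 * z ^ 3 * (2 * z * (z ^ 2 + 6 * I * t)))
      (12 * z * (z ^ 4 - 12 * t ^ 2) + (6 * z ^ 2 + 12 * I * t) * (4 * z ^ 3)
        - 12 * z ^ 2 * (2 * z * (z ^ 2 + 6 * I * t)) - 4 * z ^ 3 * (6 * z ^ 2 + 12 * I * t)) z := by
    have e : (fun z : ℂ =>
        (6 * z ^ 2 + 12 * I * t) * (z ^ 4 - 12 * t ^ 2)
          - 4 * z ^ 3 * (2 * z * (z ^ 2 + 6 * I * t)))
        = fun z : ℂ => (-2) * z ^ 6 - 36 * I * t * z ^ 4 - 72 * t ^ 2 * z ^ 2 - 144 * I * t ^ 3 := by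
      funext z; ring
    rw [e]
    have h1 := (((hasDerivAt_pow 6 z).const_mul (-2)).sub
      ((hasDerivAt_pow 4 z).const_mul (36 * I * t))).sub
      ((hasDerivAt_pow 2 z).const_mul (72 * t ^ 2))
    have h2 := h1.sub_const (144 * I * t ^ 3)
    convert h2 using 1 <;> (try push_cast) <;> (try rfl) <;> ring
  have hB0 : (fun z : ℂ => (z ^ 4 - 12 * t ^ 2) ^ 2) z ≠ 0 := pow_ne_zero 2 hD
  exact hA.div hB hB0

theorem stmt_19 (x t : ℝ) (h : x ^ 4 ≠ 12 * t ^ 2) :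
    I * deriv (fun τ => uNLS x τ) t
      = deriv (fun ξ => deriv (fun ξ' => uNLS ξ' t) ξ) x
        - 2 * (‖uNLS x t‖ : ℂ) ^ 2 * uNLS x t := by
  have hD : (x : ℂ) ^ 4 - 12 * (t : ℂ) ^ 2 ≠ 0 := by
    have h0 : ((x ^ 4 - 12 * t ^ 2 : ℝ) : ℂ) ≠ 0 := by
      exact_mod_cast sub_ne_zero.mpr h
    push_cast at h0
    exact h0
  have ht : deriv (fun τ => uNLS x τ) t
      = (12 * I * (x : ℂ) * ((x : ℂ) ^ 4 - 12 * (t : ℂ) ^ 2)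
          + 24 * (t : ℂ) * (2 * (x : ℂ) * ((x : ℂ) ^ 2 + 6 * I * (t : ℂ)))) /
        ((x : ℂ) ^ 4 - 12 * (t : ℂ) ^ 2) ^ 2 :=
    ((hd_t (x : ℂ) (t : ℂ) hD).comp_ofReal).deriv
  have hev : (fun ξ : ℝ => deriv (fun ξ' => uNLS ξ' t) ξ) =ᶠ[nhds x]
      (fun ξ : ℝ => ((6 * (ξ : ℂ) ^ 2 + 12 * I * (t : ℂ)) * ((ξ : ℂ) ^ 4 - 12 * (t : ℂ) ^ 2)
          - 4 * (ξ : ℂ) ^ 3 * (2 * (ξ : ℂ) * ((ξ : ℂ) ^ 2 + 6 * I * (t : ℂ)))) /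
        ((ξ : ℂ) ^ 4 - 12 * (t : ℂ) ^ 2) ^ 2) := by
    have hopen : IsOpen {ξ : ℝ | ξ ^ 4 ≠ 12 * t ^ 2} :=
      isOpen_compl_singleton.preimage (continuous_pow 4)
    filter_upwards [hopen.mem_nhds h] with ξ hξ
    have hDξ : (ξ : ℂ) ^ 4 - 12 * (t : ℂ) ^ 2 ≠ 0 := by
      have h0 : ((ξ ^ 4 - 12 * t ^ 2 : ℝ) : ℂ) ≠ 0 := by
        exact_mod_cast sub_ne_zero.mpr hξ
      push_cast at h0
      exact h0
    exact ((hd_x (t : ℂ) (ξ : ℂ) hDξ).comp_ofReal).deriv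
  have hx2 : deriv (fun ξ => deriv (fun ξ' => uNLS ξ' t) ξ) x
      = ((12 * (x:ℂ) * ((x:ℂ) ^ 4 - 12 * (t:ℂ) ^ 2) + (6 * (x:ℂ) ^ 2 + 12 * I * (t:ℂ)) * (4 * (x:ℂ) ^ 3)
            - 12 * (x:ℂ) ^ 2 * (2 * (x:ℂ) * ((x:ℂ) ^ 2 + 6 * I * (t:ℂ))) - 4 * (x:ℂ) ^ 3 * (6 * (x:ℂ) ^ 2 + 12 * I * (t:ℂ)))
            * ((x:ℂ) ^ 4 - 12 * (t:ℂ) ^ 2) ^ 2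
          - ((6 * (x:ℂ) ^ 2 + 12 * I * (t:ℂ)) * ((x:ℂ) ^ 4 - 12 * (t:ℂ) ^ 2)
              - 4 * (x:ℂ) ^ 3 * (2 * (x:ℂ) * ((x:ℂ) ^ 2 + 6 * I * (t:ℂ))))
            * (2 * ((x:ℂ) ^ 4 - 12 * (t:ℂ) ^ 2) * (4 * (x:ℂ) ^ 3))) /
        (((x:ℂ) ^ 4 - 12 * (t:ℂ) ^ 2) ^ 2) ^ 2 := by
    rw [hev.deriv_eq]
    exact ((hd_xx (t : ℂ) (x : ℂ) hD).comp_ofReal).deriv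
  have habs : ((‖uNLS x t‖ : ℝ) : ℂ) ^ 2
      = uNLS x t * (starRingEnd ℂ) (uNLS x t) := by
    rw [← Complex.ofReal_pow, Complex.sq_norm]
    exact (Complex.mul_conj _).symm
  have hconj : (starRingEnd ℂ) (uNLS x t)
      = 2 * (x : ℂ) * ((x : ℂ) ^ 2 - 6 * I * (t : ℂ)) / ((x : ℂ) ^ 4 - 12 * (t : ℂ) ^ 2) := by
    unfold uNLS
    simp only [map_div₀, map_mul, map_add, map_sub, map_pow, map_ofNat,
      Complex.conj_ofReal, Complex.conj_I]
    ring
  rw [ht, hx2, habs, hconj]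
  unfold uNLS
  field_simp
  linear_combination ((12)*(x:ℂ)^9 + (-576)*(x:ℂ)^5*(t:ℂ)^2 + (-1728)*(x:ℂ)*(t:ℂ)^4 + (-3456)*(x:ℂ)^3*(t:ℂ)^3*I) * Complex.I_sq
end
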